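/- Let p > 3 be a prime and let a be an integer with p ∤ a. Then V_p(x² + a/x) = 2(p − (p/3))/3 + ((p/3) − 1)/6 + (1/6)·(1 − 3(p/3))·(2/p)·Σ_{y=1}^{p−1} ((y³ + 2a²)/p), where (·/p) is the Legendre symbol and (p/3) is the Legendre symbol of p modulo 3. -/

import Mathlib

open Finset

section aux
variable {β : Type*} [DecidableEq β]

lemma exists_four {t : Finset β} (h : 4 ≤ t.card) :
    ∃ x ∈ t, ∃ y ∈ t, ∃ z ∈ t, ∃ w ∈ t,
      x ≠ y ∧ x ≠ z ∧ x ≠ w ∧ y ≠ z ∧ y ≠ w ∧ z ≠ w := by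
  obtain ⟨x, hx⟩ := Finset.card_pos.mp (show 0 < t.card by omega)
  have e1 := Finset.card_erase_of_mem hx
  obtain ⟨y, hy⟩ := Finset.card_pos.mp (show 0 < (t.erase x).card by omega)
  have e2 := Finset.card_erase_of_mem hy
  obtain ⟨z, hz⟩ := Finset.card_pos.mp (show 0 < ((t.erase x).erase y).card by omega)
  have e3 := Finset.card_erase_of_mem hz
  obtain ⟨w, hw⟩ := Finset.card_pos.mp (show 0 < (((t.erase x).erase y).erase z).card by omega)
  simp only [Finset.mem_erase] at hy hz hw
  exact ⟨x, hx, y, hy.2, z, hz.2.2, w, hw.2.2.2, hy.1.symm, hz.2.1.symm, hw.2.2.1.symm,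
    hz.1.symm, hw.2.1.symm, hw.1.symm⟩

lemma card_triples (t : Finset β) :
    ((t ×ˢ t ×ˢ t).filter fun q => q.1 ≠ q.2.1 ∧ q.1 ≠ q.2.2 ∧ q.2.1 ≠ q.2.2).card
      = t.card * ((t.card - 1) * (t.card - 2)) := by
  set A := (t ×ˢ t ×ˢ t).filter fun q => q.1 ≠ q.2.1 ∧ q.1 ≠ q.2.2 ∧ q.2.1 ≠ q.2.2 with hA
  have H : ∀ q ∈ A, q.1 ∈ t := by
    intro q hq
    simp only [hA, Finset.mem_filter, Finset.mem_product] at hq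
    exact hq.1.1
  rw [Finset.card_eq_sum_card_fiberwise H]
  have key : ∀ x ∈ t, (A.filter fun q => q.1 = x).card = (t.card - 1) * (t.card - 2) := by
    intro x hx
    have hcb : (A.filter fun q => q.1 = x).card = ((t.erase x).offDiag).card := by
      apply Finset.card_bij (fun q _ => q.2)
      · intro q hq
        simp only [hA, Finset.mem_filter, Finset.mem_product, Finset.mem_offDiag,
          Finset.mem_erase] at hq ⊢
        obtain ⟨⟨⟨h1, h2, h3⟩, hne1, hne2, hne3⟩, hqx⟩ := hq
        subst hqx
        exact ⟨⟨fun h => hne1 h.symm, h2⟩, ⟨fun h => hne2 h.symm, h3⟩, hne3⟩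
      · intro q1 hq1 q2 hq2 h
        simp only [Finset.mem_filter] at hq1 hq2
        exact Prod.ext (hq1.2.trans hq2.2.symm) h
      · intro q hq
        rw [Finset.mem_offDiag] at hq
        obtain ⟨h1, h2, h3⟩ := hq
        rw [Finset.mem_erase] at h1 h2
        exact ⟨(x, q), Finset.mem_filter.mpr ⟨Finset.mem_filter.mpr
          ⟨Finset.mem_product.mpr ⟨hx, Finset.mem_product.mpr ⟨h1.2, h2.2⟩⟩,
           fun h => h1.1 h.symm, fun h => h2.1 h.symm, h3⟩, rfl⟩, rfl⟩
    rw [hcb, Finset.offDiag_card, Finset.card_erase_of_mem hx]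
    rcases Nat.exists_eq_add_of_le (Finset.card_pos.mpr ⟨x, hx⟩) with ⟨k, hk⟩
    rw [hk]
    simp only [Nat.add_sub_cancel_left, show 1 + k - 1 = k by omega, show 1 + k - 2 = k - 1 by omega]
    rcases k with _ | m
    · simp
    · rw [show (m+1)*(m+1) = (m+1)*m + (m+1) by ring, Nat.add_sub_cancel, Nat.succ_sub_one]
  rw [Finset.sum_congr rfl key, Finset.sum_const, smul_eq_mul]
end aux

section field
variable {F : Type*} [Field F] {α : F}

lemma fm_eq_iff (hα : α ≠ 0) {x y : F} (hx : x ≠ 0) (hy : y ≠ 0) :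
    x ^ 2 + α * x⁻¹ = y ^ 2 + α * y⁻¹ ↔ x = y ∨ x * y * (x + y) = α := by
  constructor
  · intro h
    have h' : (x - y) * (x * y * (x + y) - α) = 0 := by
      have hxy : x * y ≠ 0 := mul_ne_zero hx hy
      field_simp at h
      linear_combination h
    rcases mul_eq_zero.1 h' with h1 | h2
    · exact Or.inl (sub_eq_zero.1 h1)
    · exact Or.inr (sub_eq_zero.1 h2)
  · rintro (rfl | h)
    · rfl
    · field_simp
      linear_combination (x - y) * h

lemma sum_zero_of {x y z : F} (hy : y ≠ 0) (hxz : x ≠ z)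
    (h1 : x * y * (x + y) = α) (h2 : y * z * (y + z) = α) : x + y + z = 0 := by
  have h : y * ((x - z) * (x + y + z)) = 0 := by linear_combination h1 - h2
  rcases mul_eq_zero.1 h with h' | h'
  · exact absurd h' hy
  rcases mul_eq_zero.1 h' with h' | h'
  · exact absurd (sub_eq_zero.1 h') hxz
  · exact h'

lemma nonzero_of_g (hα : α ≠ 0) {x y : F} (h : x * y * (x + y) = α) : x ≠ 0 ∧ y ≠ 0 := by
  constructor <;> rintro rfl <;> simp at h <;> exact hα h.symm

lemma cube_eq_of (hα : α ≠ 0) (h3 : (3 : F) ≠ 0) {x y : F}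
    (h : x * y * (x + y) = α) (hne : x ≠ y) (hxy : y = -2 * x) : 2 * x ^ 3 = α := by
  subst hxy; linear_combination h

lemma pair_of_cube (hα : α ≠ 0) (h3 : (3 : F) ≠ 0) {x : F} (h : 2 * x ^ 3 = α) :
    x * (-2 * x) * (x + -2 * x) = α ∧ x ≠ -2 * x := by
  have hx : x ≠ 0 := by rintro rfl; simp at h; exact hα h.symm
  constructor
  · linear_combination h
  · intro he
    have : (3 : F) * x = 0 := by linear_combination he
    rcases mul_eq_zero.1 this with h' | h'
    · exact h3 h'
    · exact hx h'
end field

def sS (p : ℕ) [NeZero p] : Finset (ZMod p) := univ.filter (· ≠ 0)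

def fF {p : ℕ} (α : ZMod p) : ZMod p → ZMod p := fun x => x ^ 2 + α * x⁻¹

def MsetD {p : ℕ} [NeZero p] (α : ZMod p) : Finset (ZMod p × ZMod p) :=
  (sS p ×ˢ sS p).filter (fun q => fF α q.1 = fF α q.2 ∧ q.1 ≠ q.2)

def TsetD {p : ℕ} [NeZero p] (α : ZMod p) : Finset (ZMod p × ZMod p × ZMod p) :=
  (sS p ×ˢ sS p ×ˢ sS p).filter (fun q => fF α q.1 = fF α q.2.1 ∧ fF α q.2.1 = fF α q.2.2
    ∧ q.1 ≠ q.2.1 ∧ q.1 ≠ q.2.2 ∧ q.2.1 ≠ q.2.2)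

def PsetD {p : ℕ} [NeZero p] (α : ZMod p) : Finset (ZMod p × ZMod p) :=
  (univ : Finset (ZMod p × ZMod p)).filter (fun q => q.1 * q.2 * (q.1 + q.2) = α)

def DsetD {p : ℕ} [NeZero p] (α : ZMod p) : Finset (ZMod p) :=
  (univ : Finset (ZMod p)).filter (fun x => 2 * x ^ 3 = α)

section core
variable {p : ℕ} [hp : Fact p.Prime]

lemma mem_sS {x : ZMod p} : x ∈ sS p ↔ x ≠ 0 := by simp [sS]

lemma fm_eq_iff' (α : ZMod p) (hα : α ≠ 0) {x y : ZMod p} (hx : x ≠ 0) (hy : y ≠ 0) :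
    fF α x = fF α y ↔ x = y ∨ x * y * (x + y) = α := fm_eq_iff hα hx hy

lemma fiber_le (α : ZMod p) (hα : α ≠ 0) (b : ZMod p) :
    ((sS p).filter (fun x => fF α x = b)).card ≤ 3 := by
  by_contra hcon
  obtain ⟨x, hx, y, hy, z, hz, w, hw, nxy, nxz, nxw, nyz, nyw, nzw⟩ :=
    exists_four (t := (sS p).filter (fun x => fF α x = b)) (by omega)
  simp only [Finset.mem_filter, mem_sS] at hx hy hz hw
  have gxy : x * y * (x + y) = α :=
    ((fm_eq_iff' α hα hx.1 hy.1).1 (hx.2.trans hy.2.symm)).resolve_left nxy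
  have gyz : y * z * (y + z) = α :=
    ((fm_eq_iff' α hα hy.1 hz.1).1 (hy.2.trans hz.2.symm)).resolve_left nyz
  have gyw : y * w * (y + w) = α :=
    ((fm_eq_iff' α hα hy.1 hw.1).1 (hy.2.trans hw.2.symm)).resolve_left nyw
  have e1 : x + y + z = 0 := sum_zero_of hy.1 nxz gxy gyz
  have e2 : x + y + w = 0 := sum_zero_of hy.1 nxw gxy gyw
  exact nzw (by linear_combination e1 - e2)

lemma count1 (α : ZMod p) (hα : α ≠ 0) :
    6 * ((((sS p).image (fF α)).card : ℤ))
      = 6 * ((sS p).card : ℤ) - 3 * ((MsetD α).card : ℤ) + ((TsetD α).card : ℤ) := by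
  classical
  set f := fF α
  set s := sS p
  set I := s.image f with hI
  have h1 : s.card = ∑ b ∈ I, (s.filter fun x => f x = b).card :=
    Finset.card_eq_sum_card_fiberwise (fun x hx => Finset.mem_image_of_mem f hx)
  have h2 : (MsetD α).card = ∑ b ∈ I, ((s.filter fun x => f x = b).offDiag).card := by
    rw [Finset.card_eq_sum_card_fiberwise (f := fun q => f q.1) (t := I)
      (fun q hq => by
        simp only [MsetD, Finset.mem_coe, Finset.mem_filter, Finset.mem_product] at hq
        exact Finset.mem_image_of_mem f hq.1.1)]
    refine Finset.sum_congr rfl fun b _ => ?_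
    congr 1
    ext q
    simp only [MsetD, Finset.mem_filter, Finset.mem_product, Finset.mem_offDiag]
    constructor
    · rintro ⟨⟨⟨q1s, q2s⟩, hfe, hne⟩, hb⟩
      exact ⟨⟨q1s, hb⟩, ⟨q2s, hfe.symm.trans hb⟩, hne⟩
    · rintro ⟨⟨q1s, hb1⟩, ⟨q2s, hb2⟩, hne⟩
      exact ⟨⟨⟨q1s, q2s⟩, hb1.trans hb2.symm, hne⟩, hb1⟩
  have h3 : (TsetD α).card = ∑ b ∈ I,
      (((s.filter fun x => f x = b) ×ˢ (s.filter fun x => f x = b) ×ˢ (s.filter fun x => f x = b)).filter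
        fun q => q.1 ≠ q.2.1 ∧ q.1 ≠ q.2.2 ∧ q.2.1 ≠ q.2.2).card := by
    rw [Finset.card_eq_sum_card_fiberwise (f := fun q => f q.1) (t := I)
      (fun q hq => by
        simp only [TsetD, Finset.mem_coe, Finset.mem_filter, Finset.mem_product] at hq
        exact Finset.mem_image_of_mem f hq.1.1)]
    refine Finset.sum_congr rfl fun b _ => ?_
    congr 1
    ext q
    simp only [TsetD, Finset.mem_filter, Finset.mem_product]
    constructor
    · rintro ⟨⟨⟨q1s, q2s, q3s⟩, e1, e2, n1, n2, n3⟩, hb⟩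
      exact ⟨⟨⟨q1s, hb⟩, ⟨q2s, e1.symm.trans hb⟩, ⟨q3s, e2.symm.trans (e1.symm.trans hb)⟩⟩, n1, n2, n3⟩
    · rintro ⟨⟨⟨q1s, hb1⟩, ⟨q2s, hb2⟩, ⟨q3s, hb3⟩⟩, n1, n2, n3⟩
      exact ⟨⟨⟨q1s, q2s, q3s⟩, hb1.trans hb2.symm, hb2.trans hb3.symm, n1, n2, n3⟩, hb1⟩
  have key : ∀ b ∈ I, (6 : ℤ)
      = 6 * ((s.filter fun x => f x = b).card : ℤ)
        - 3 * (((s.filter fun x => f x = b).offDiag).card : ℤ)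
        + ((((s.filter fun x => f x = b) ×ˢ (s.filter fun x => f x = b) ×ˢ (s.filter fun x => f x = b)).filter
            fun q => q.1 ≠ q.2.1 ∧ q.1 ≠ q.2.2 ∧ q.2.1 ≠ q.2.2).card : ℤ) := by
    intro b hb
    obtain ⟨x, hx, hfx⟩ := Finset.mem_image.1 hb
    set n := (s.filter fun x => f x = b).card with hn
    have hge : 1 ≤ n := Finset.card_pos.mpr ⟨x, Finset.mem_filter.mpr ⟨hx, hfx⟩⟩
    have hle : n ≤ 3 := fiber_le α hα b
    rw [Finset.offDiag_card, card_triples, ← hn]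
    interval_cases n <;> norm_num
  calc 6 * ((I.card : ℤ)) = ∑ b ∈ I, (6:ℤ) := by rw [Finset.sum_const, nsmul_eq_mul]; ring
    _ = ∑ b ∈ I, (6 * ((s.filter fun x => f x = b).card : ℤ)
        - 3 * (((s.filter fun x => f x = b).offDiag).card : ℤ)
        + ((((s.filter fun x => f x = b) ×ˢ (s.filter fun x => f x = b) ×ˢ (s.filter fun x => f x = b)).filter
            fun q => q.1 ≠ q.2.1 ∧ q.1 ≠ q.2.2 ∧ q.2.1 ≠ q.2.2).card : ℤ)) :=
      Finset.sum_congr rfl key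
    _ = 6 * ((s.card : ℤ)) - 3 * ((MsetD α).card : ℤ) + ((TsetD α).card : ℤ) := by
      rw [Finset.sum_add_distrib, Finset.sum_sub_distrib, ← Finset.mul_sum, ← Finset.mul_sum,
        h1, h2, h3]
      push_cast [Nat.cast_sum]
      ring
end core
section setrel
variable {p : ℕ} [hp : Fact p.Prime]

lemma MD_eq_P (α : ZMod p) (hα : α ≠ 0) (h3 : (3 : ZMod p) ≠ 0) :
    (MsetD α).card + (DsetD α).card = (PsetD α).card := by
  classical
  have hM : MsetD α = (PsetD α).filter (fun q => q.1 ≠ q.2) := by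
    ext q
    simp only [MsetD, PsetD, Finset.mem_filter, Finset.mem_product, Finset.mem_univ, true_and,
      mem_sS]
    constructor
    · rintro ⟨⟨h1, h2⟩, hfe, hne⟩
      exact ⟨((fm_eq_iff' α hα h1 h2).1 hfe).resolve_left hne, hne⟩
    · rintro ⟨hg, hne⟩
      obtain ⟨h1, h2⟩ := nonzero_of_g hα hg
      exact ⟨⟨h1, h2⟩, (fm_eq_iff' α hα h1 h2).2 (Or.inr hg), hne⟩
  have hsplit : ((PsetD α).filter (fun q => q.1 ≠ q.2)).card
      + ((PsetD α).filter (fun q => q.1 = q.2)).card = (PsetD α).card := by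
    have := Finset.card_filter_add_card_filter_not
      (s := PsetD α) (p := fun q => q.1 ≠ q.2)
    simpa [not_not] using this
  have hD : ((PsetD α).filter (fun q => q.1 = q.2)).card = (DsetD α).card := by
    apply Finset.card_nbij' (fun q => q.1) (fun x => (x, x))
    · intro q hq
      simp only [PsetD, DsetD, Finset.mem_coe, Finset.mem_filter, Finset.mem_univ, true_and] at hq ⊢
      obtain ⟨hg, he⟩ := hq
      rw [← he] at hg
      linear_combination hg
    · intro x hx
      simp only [PsetD, DsetD, Finset.mem_coe, Finset.mem_filter, Finset.mem_univ, true_and] at hx ⊢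
      exact ⟨by linear_combination hx, trivial⟩
    · intro q hq
      rw [Finset.mem_coe, Finset.mem_filter] at hq
      exact Prod.ext rfl hq.2
    · intro x _
      rfl
  rw [hM, ← hD]
  omega

lemma TD_eq_M (α : ZMod p) (hα : α ≠ 0) (h3 : (3 : ZMod p) ≠ 0) :
    (TsetD α).card + 2 * (DsetD α).card = (MsetD α).card := by
  classical
  -- membership unfolding for Mset
  have memM : ∀ q : ZMod p × ZMod p, q ∈ MsetD α ↔ (q.1 * q.2 * (q.1 + q.2) = α ∧ q.1 ≠ q.2) := by
    intro q
    simp only [MsetD, Finset.mem_filter, Finset.mem_product, mem_sS]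
    constructor
    · rintro ⟨⟨h1, h2⟩, hfe, hne⟩
      exact ⟨((fm_eq_iff' α hα h1 h2).1 hfe).resolve_left hne, hne⟩
    · rintro ⟨hg, hne⟩
      obtain ⟨h1, h2⟩ := nonzero_of_g hα hg
      exact ⟨⟨h1, h2⟩, (fm_eq_iff' α hα h1 h2).2 (Or.inr hg), hne⟩
  have split1 : ((MsetD α).filter (fun q => q.2 = -2 * q.1)).card
      + ((MsetD α).filter (fun q => ¬ q.2 = -2 * q.1)).card = (MsetD α).card := by
    have := Finset.card_filter_add_card_filter_not
      (s := MsetD α) (p := fun q => q.2 = -2 * q.1)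
    simpa using this
  have split2 : ((MsetD α).filter (fun q => ¬ q.2 = -2 * q.1 ∧ q.1 = -2 * q.2)).card
      + ((MsetD α).filter (fun q => ¬ q.2 = -2 * q.1 ∧ ¬ q.1 = -2 * q.2)).card
      = ((MsetD α).filter (fun q => ¬ q.2 = -2 * q.1)).card := by
    have := Finset.card_filter_add_card_filter_not
      (s := (MsetD α).filter (fun q => ¬ q.2 = -2 * q.1)) (p := fun q => q.1 = -2 * q.2)
    simpa [Finset.filter_filter] using this
  -- first bad part
  have hB1 : ((MsetD α).filter (fun q => q.2 = -2 * q.1)).card = (DsetD α).card := by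
    apply Finset.card_nbij' (fun q => q.1) (fun x => (x, -2 * x))
    · intro q hq
      rw [Finset.mem_coe, Finset.mem_filter, memM] at hq
      simp only [DsetD, Finset.mem_coe, Finset.mem_filter, Finset.mem_univ, true_and]
      exact cube_eq_of hα h3 hq.1.1 hq.1.2 hq.2
    · intro x hx
      simp only [DsetD, Finset.mem_coe, Finset.mem_filter, Finset.mem_univ, true_and] at hx
      obtain ⟨hg, hne⟩ := pair_of_cube hα h3 hx
      rw [Finset.mem_coe, Finset.mem_filter, memM]
      exact ⟨⟨hg, hne⟩, rfl⟩
    · intro q hq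
      rw [Finset.mem_coe, Finset.mem_filter] at hq
      exact (Prod.ext rfl hq.2.symm)
    · intro x _; rfl
  -- second bad part
  have hB2 : ((MsetD α).filter (fun q => ¬ q.2 = -2 * q.1 ∧ q.1 = -2 * q.2)).card
      = (DsetD α).card := by
    apply Finset.card_nbij' (fun q => q.2) (fun y => (-2 * y, y))
    · intro q hq
      rw [Finset.mem_coe, Finset.mem_filter, memM] at hq
      simp only [DsetD, Finset.mem_coe, Finset.mem_filter, Finset.mem_univ, true_and]
      have hg' : q.2 * q.1 * (q.2 + q.1) = α := by linear_combination hq.1.1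
      exact cube_eq_of hα h3 hg' (fun h => hq.1.2 h.symm) hq.2.2
    · intro y hy
      simp only [DsetD, Finset.mem_coe, Finset.mem_filter, Finset.mem_univ, true_and] at hy
      obtain ⟨hg, hne⟩ := pair_of_cube hα h3 hy
      have hy0 : y ≠ 0 := by
        rintro rfl; rw [show (2:ZMod p) * 0 ^ 3 = 0 by ring] at hy; exact hα hy.symm
      rw [Finset.mem_coe, Finset.mem_filter, memM]
      refine ⟨⟨by linear_combination hg, fun h => hne h.symm⟩, ?_, rfl⟩
      intro hcon
      simp only at hcon
      have : (3 : ZMod p) * y = 0 := by linear_combination -hcon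
      rcases mul_eq_zero.1 this with h' | h'
      · exact h3 h'
      · exact hy0 h'
    · intro q hq
      rw [Finset.mem_coe, Finset.mem_filter] at hq
      exact (Prod.ext hq.2.2.symm rfl)
    · intro x _; rfl
  -- good part is Tset
  have hT : ((MsetD α).filter (fun q => ¬ q.2 = -2 * q.1 ∧ ¬ q.1 = -2 * q.2)).card
      = (TsetD α).card := by
    apply Finset.card_nbij' (fun q => (q.1, q.2, -(q.1 + q.2))) (fun q => (q.1, q.2.1))
    · intro q hq
      rw [Finset.mem_coe, Finset.mem_filter, memM] at hq
      obtain ⟨⟨hg, hne⟩, hb1, hb2⟩ := hq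
      obtain ⟨h1, h2⟩ := nonzero_of_g hα hg
      have hz : -(q.1 + q.2) ≠ 0 := by
        intro h
        have : q.2 = -q.1 := by linear_combination -h
        rw [this] at hg
        apply hα
        rw [← hg]; ring
      have hgyz : q.2 * (-(q.1 + q.2)) * (q.2 + -(q.1 + q.2)) = α := by linear_combination hg
      simp only [TsetD, Finset.mem_coe, Finset.mem_filter, Finset.mem_product, mem_sS]
      refine ⟨⟨h1, h2, hz⟩, (fm_eq_iff' α hα h1 h2).2 (Or.inr hg),
        (fm_eq_iff' α hα h2 hz).2 (Or.inr hgyz), hne, ?_, ?_⟩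
      · intro h
        exact hb1 (by linear_combination h)
      · intro h
        exact hb2 (by linear_combination h)
    · intro q hq
      simp only [TsetD, Finset.mem_coe, Finset.mem_filter, Finset.mem_product, mem_sS] at hq
      obtain ⟨⟨h1, h2, h3'⟩, e1, e2, n1, n2, n3⟩ := hq
      have hg : q.1 * q.2.1 * (q.1 + q.2.1) = α := ((fm_eq_iff' α hα h1 h2).1 e1).resolve_left n1
      have hg2 : q.2.1 * q.2.2 * (q.2.1 + q.2.2) = α :=
        ((fm_eq_iff' α hα h2 h3').1 e2).resolve_left n3
      have hsum : q.1 + q.2.1 + q.2.2 = 0 := sum_zero_of h2 n2 hg hg2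
      rw [Finset.mem_coe, Finset.mem_filter, memM]
      refine ⟨⟨hg, n1⟩, ?_, ?_⟩
      · intro h
        exact n2 (by linear_combination h - hsum)
      · intro h
        exact n3 (by linear_combination h - hsum)
    · intro q hq
      rfl
    · intro q hq
      simp only [TsetD, Finset.mem_coe, Finset.mem_filter, Finset.mem_product, mem_sS] at hq
      obtain ⟨⟨h1, h2, h3'⟩, e1, e2, n1, n2, n3⟩ := hq
      have hg : q.1 * q.2.1 * (q.1 + q.2.1) = α := ((fm_eq_iff' α hα h1 h2).1 e1).resolve_left n1
      have hg2 : q.2.1 * q.2.2 * (q.2.1 + q.2.2) = α :=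
        ((fm_eq_iff' α hα h2 h3').1 e2).resolve_left n3
      have hsum : q.1 + q.2.1 + q.2.2 = 0 := sum_zero_of h2 n2 hg hg2
      have : -(q.1 + q.2.1) = q.2.2 := by linear_combination -hsum
      beta_reduce
      rw [this]
  omega
end setrel
section chars
variable {p : ℕ} [hp : Fact p.Prime]

lemma natc_ne_zero (hp3 : 3 < p) {k : ℕ} (hk : 0 < k) (hk3 : k ≤ 3) : ((k : ℕ) : ZMod p) ≠ 0 := by
  rw [Ne, ZMod.natCast_eq_zero_iff]
  intro h
  have := Nat.le_of_dvd hk h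
  omega

lemma two_nz (hp3 : 3 < p) : (2 : ZMod p) ≠ 0 := by
  have := natc_ne_zero (p := p) hp3 (k := 2) (by norm_num) (by norm_num)
  simpa using this

lemma three_nz (hp3 : 3 < p) : (3 : ZMod p) ≠ 0 := by
  have := natc_ne_zero (p := p) hp3 (k := 3) (by norm_num) (by norm_num)
  simpa using this

lemma ringchar_ne_two (hp3 : 3 < p) : ringChar (ZMod p) ≠ 2 := by
  rw [ZMod.ringChar_zmod_n]
  omega

lemma sS_eq : sS p = (univ : Finset (ZMod p)).erase 0 := by
  rw [sS, Finset.filter_ne']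

lemma sS_card (hp3 : 3 < p) : (sS p).card = p - 1 := by
  rw [sS_eq, Finset.card_erase_of_mem (Finset.mem_univ 0), Finset.card_univ, ZMod.card]

lemma P_eval (hp3 : 3 < p) (α : ZMod p) (hα : α ≠ 0) :
    ((PsetD α).card : ℤ) = (p - 1)
      + (quadraticChar (ZMod p) 2) * ∑ t ∈ sS p, quadraticChar (ZMod p) (t ^ 3 + 2 * α ^ 2) := by
  classical
  have h2 : (2 : ZMod p) ≠ 0 := two_nz hp3
  have hrc : ringChar (ZMod p) ≠ 2 := ringchar_ne_two hp3
  -- step i: fiberwise by the sum of coordinates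
  have h1 : (PsetD α).card
      = ∑ σ : ZMod p, ((univ : Finset (ZMod p)).filter fun x => x * (σ - x) * σ = α).card := by
    rw [Finset.card_eq_sum_card_fiberwise (f := fun q => q.1 + q.2)
      (t := (univ : Finset (ZMod p))) (fun q _ => Finset.mem_univ _)]
    refine Finset.sum_congr rfl fun σ _ => ?_
    apply Finset.card_nbij' (fun q => q.1) (fun x => (x, σ - x))
    · intro q hq
      simp only [PsetD, Finset.mem_coe, Finset.mem_filter, Finset.mem_univ, true_and] at hq ⊢
      obtain ⟨hg, hs⟩ := hq
      linear_combination hg - q.1 * (σ + q.2) * hs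
    · intro x hx
      simp only [PsetD, Finset.mem_coe, Finset.mem_filter, Finset.mem_univ, true_and] at hx ⊢
      constructor
      · linear_combination hx
      · ring
    · intro q hq
      simp only [Finset.mem_coe, Finset.mem_filter] at hq
      have : σ - q.1 = q.2 := by linear_combination -hq.2
      beta_reduce
      rw [this]
    · intro x _
      rfl
  -- step ii: evaluate each fiber
  have h2c : ∀ σ : ZMod p, σ ≠ 0 →
      ((((univ : Finset (ZMod p)).filter fun x => x * (σ - x) * σ = α).card : ℤ))
        = quadraticChar (ZMod p) (σ * (σ ^ 3 - 4 * α)) + 1 := by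
    intro σ hσ
    have hbij : ((univ : Finset (ZMod p)).filter fun x => x * (σ - x) * σ = α).card
        = ((univ : Finset (ZMod p)).filter fun u => u ^ 2 = σ * (σ ^ 3 - 4 * α)).card := by
      apply Finset.card_nbij' (fun x => σ * (2 * x - σ)) (fun u => (u * σ⁻¹ + σ) * 2⁻¹)
      · intro x hx
        simp only [Finset.mem_coe, Finset.mem_filter, Finset.mem_univ, true_and] at hx ⊢
        linear_combination (-4 * σ) * hx
      · intro u hu
        simp only [Finset.mem_coe, Finset.mem_filter, Finset.mem_univ, true_and] at hu ⊢
        have h4 : (-4 : ZMod p) * σ ≠ 0 := by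
          apply mul_ne_zero _ hσ
          have : (-4 : ZMod p) = -(2 * 2) := by norm_num
          rw [this]; exact neg_ne_zero.mpr (mul_ne_zero h2 h2)
        set x := (u * σ⁻¹ + σ) * 2⁻¹ with hxdef
        have hu2 : σ * (2 * x - σ) = u := by
          rw [hxdef]; field_simp; ring
        apply mul_left_cancel₀ h4
        linear_combination hu + (σ * (2 * x - σ) + u) * hu2
      · intro x _
        field_simp
        ring
      · intro u _
        field_simp
        ring
    rw [hbij]
    have := quadraticChar_card_sqrts hrc (σ * (σ ^ 3 - 4 * α))
    rw [← this]
    congr 1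
    rw [Set.toFinset_setOf]
  -- zero fiber is empty
  have h0 : (((univ : Finset (ZMod p)).filter fun x => x * ((0:ZMod p) - x) * 0 = α).card) = 0 := by
    rw [Finset.card_eq_zero, Finset.eq_empty_iff_forall_notMem]
    intro x hx
    simp only [Finset.mem_filter, Finset.mem_univ, true_and, mul_zero] at hx
    exact hα hx.symm
  -- assemble over σ ≠ 0
  have hsum : ((PsetD α).card : ℤ)
      = ∑ σ ∈ sS p, ((quadraticChar (ZMod p) (σ * (σ ^ 3 - 4 * α)) + 1)) := by
    have hsplit := Finset.sum_erase_add (univ : Finset (ZMod p))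
      (fun σ => ((univ : Finset (ZMod p)).filter fun x => x * (σ - x) * σ = α).card)
      (Finset.mem_univ 0)
    rw [h1, ← hsplit, h0, add_zero, sS_eq]
    push_cast
    refine Finset.sum_congr rfl fun σ hσ => ?_
    exact h2c σ (Finset.mem_erase.1 hσ).1
  rw [hsum, Finset.sum_add_distrib, Finset.sum_const, sS_card hp3, nsmul_eq_mul, mul_one]
  have hreindex : ∑ σ ∈ sS p, quadraticChar (ZMod p) (σ * (σ ^ 3 - 4 * α))
      = ∑ t ∈ sS p, quadraticChar (ZMod p) 2 * quadraticChar (ZMod p) (t ^ 3 + 2 * α ^ 2) := by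
    apply Finset.sum_nbij' (i := fun σ => -(2 * α) * σ⁻¹) (j := fun t => -(2 * α) * t⁻¹)
    · intro σ hσ
      rw [mem_sS] at hσ ⊢
      exact mul_ne_zero (neg_ne_zero.mpr (mul_ne_zero h2 hα)) (inv_ne_zero hσ)
    · intro t ht
      rw [mem_sS] at ht ⊢
      exact mul_ne_zero (neg_ne_zero.mpr (mul_ne_zero h2 hα)) (inv_ne_zero ht)
    · intro σ hσ
      rw [mem_sS] at hσ
      field_simp
    · intro t ht
      rw [mem_sS] at ht
      field_simp
    · intro σ hσ
      rw [mem_sS] at hσ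
      have key : σ * (σ ^ 3 - 4 * α)
          = 2 * (σ ^ 2 * (2 * α)⁻¹) ^ 2 * ((-(2 * α) * σ⁻¹) ^ 3 + 2 * α ^ 2) := by
        field_simp
        ring
      rw [key, map_mul, map_mul,
        quadraticChar_sq_one' (by
          apply mul_ne_zero (pow_ne_zero 2 hσ) (inv_ne_zero (mul_ne_zero h2 hα))), mul_one]
  rw [hreindex, ← Finset.mul_sum]
  push_cast [Nat.cast_sub (show 1 ≤ p by omega)]
  ring
end chars
section final
variable {p : ℕ} [hp : Fact p.Prime]

lemma cube_bij (hp2 : p % 3 = 2) : Function.Bijective (fun x : ZMod p => x ^ 3) := by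
  have hplt : 1 < p := hp.out.one_lt
  have hinj : Function.Injective (fun x : ZMod p => x ^ 3) := by
    obtain ⟨e, he⟩ : 3 ∣ 2 * p - 1 := by omega
    have hkey : ∀ z : ZMod p, (z ^ 3) ^ e = z := by
      intro z
      rcases eq_or_ne z 0 with rfl | hz
      · rw [zero_pow (by norm_num : (3:ℕ) ≠ 0), zero_pow (by omega : e ≠ 0)]
      · rw [← pow_mul, show 3 * e = (p - 1) * 2 + 1 by omega, pow_add, pow_mul,
          ZMod.pow_card_sub_one_eq_one hz, one_pow, pow_one, one_mul]
    intro x y h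
    simpa only [hkey] using congrArg (· ^ e) h
  exact Finite.injective_iff_bijective.1 hinj

lemma S_eval (hp3 : 3 < p) (hp2 : p % 3 = 2) (α : ZMod p) (hα : α ≠ 0) :
    ∑ t ∈ sS p, quadraticChar (ZMod p) (t ^ 3 + 2 * α ^ 2)
      = - quadraticChar (ZMod p) 2 := by
  have hrc := ringchar_ne_two hp3
  have huniv : ∑ t : ZMod p, quadraticChar (ZMod p) (t ^ 3 + 2 * α ^ 2) = 0 := by
    rw [Fintype.sum_bijective _ (cube_bij hp2)
      (fun t => quadraticChar (ZMod p) (t ^ 3 + 2 * α ^ 2))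
      (fun u => quadraticChar (ZMod p) (u + 2 * α ^ 2)) (fun t => rfl)]
    rw [Fintype.sum_equiv (Equiv.addRight (2 * α ^ 2))
      (fun u => quadraticChar (ZMod p) (u + 2 * α ^ 2))
      (fun v => quadraticChar (ZMod p) v) (fun u => rfl)]
    exact quadraticChar_sum_zero hrc
  have hsplit := Finset.sum_erase_add (univ : Finset (ZMod p))
    (fun t => quadraticChar (ZMod p) (t ^ 3 + 2 * α ^ 2)) (Finset.mem_univ 0)
  rw [huniv] at hsplit
  rw [sS_eq]
  have h0 : quadraticChar (ZMod p) ((0:ZMod p) ^ 3 + 2 * α ^ 2)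
      = quadraticChar (ZMod p) 2 := by
    rw [show ((0:ZMod p) ^ 3 + 2 * α ^ 2) = 2 * α ^ 2 by ring, map_mul,
      quadraticChar_sq_one' hα, mul_one]
  rw [h0] at hsplit
  linarith

lemma legendre2_eq (hp3 : 3 < p) :
    legendreSym p 2 = quadraticChar (ZMod p) 2 := by
  rw [legendreSym]
  norm_num

lemma aux_not_square : ¬ IsSquare (((2:ℕ)) : ZMod 3) := by decide

lemma legendre3_cases (hp3 : 3 < p) :
    legendreSym 3 p = 1 ∨ (legendreSym 3 p = -1 ∧ p % 3 = 2) := by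
  haveI : Fact (Nat.Prime 3) := ⟨by norm_num⟩
  have hnd : ¬ (3 ∣ p) := by
    intro h
    have := (Nat.prime_dvd_prime_iff_eq (by norm_num) hp.out).1 h
    omega
  have hmod : p % 3 = 1 ∨ p % 3 = 2 := by omega
  have hcast : (((p:ℤ)) : ZMod 3) = ((p % 3 : ℕ) : ZMod 3) := by
    push_cast
    rw [ZMod.natCast_mod]
  rcases hmod with h1 | h2
  · left
    rw [legendreSym, hcast, h1]
    norm_num
  · right
    refine ⟨?_, h2⟩
    rw [legendreSym, hcast, h2]
    exact quadraticChar_neg_one_iff_not_isSquare.mpr aux_not_square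
end final
section final2
variable {p : ℕ} [hp : Fact p.Prime]

lemma legendre_sum_eq (hp3 : 3 < p) (a : ℤ) :
    ∑ y ∈ Finset.Icc 1 (p - 1), legendreSym p ((y : ℤ) ^ 3 + 2 * a ^ 2)
      = ∑ t ∈ sS p, quadraticChar (ZMod p) (t ^ 3 + 2 * ((a : ZMod p)) ^ 2) := by
  apply Finset.sum_nbij' (i := fun y : ℕ => ((y : ZMod p)))
    (j := fun t : ZMod p => t.val)
  · intro y hy
    rw [Finset.mem_Icc] at hy
    rw [mem_sS, Ne, ZMod.natCast_eq_zero_iff]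
    intro hdvd
    rcases Nat.eq_zero_or_pos y with rfl | hpos
    · omega
    · have := Nat.le_of_dvd hpos hdvd
      omega
  · intro t ht
    rw [mem_sS] at ht
    rw [Finset.mem_Icc]
    have h1 : 0 < t.val := ZMod.val_pos.mpr ht
    have h2 : t.val < p := ZMod.val_lt t
    omega
  · intro y hy
    rw [Finset.mem_Icc] at hy
    exact ZMod.val_cast_of_lt (by omega)
  · intro t _
    exact ZMod.natCast_zmod_val t
  · intro y _
    rw [legendreSym]
    congr 1
    push_cast
    ring

lemma V_eq (hp3 : 3 < p) (a : ℤ) (ha : ¬ (p : ℤ) ∣ a) :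
    (((Finset.range p).filter (fun b : ℕ =>
      ∃ x ∈ Finset.Icc 1 (p - 1),
        (x : ℤ) ^ 3 + a ≡ (b : ℤ) * (x : ℤ) [ZMOD (p : ℤ)])).card)
      = ((sS p).image (fF ((a : ZMod p)))).card := by
  classical
  set α := ((a : ZMod p)) with hαdef
  have hα : α ≠ 0 := by
    rw [hαdef, Ne, ZMod.intCast_zmod_eq_zero_iff_dvd]
    exact ha
  have hmem : ∀ β : ZMod p, β ∈ (sS p).image (fF α) ↔ ∃ ξ : ZMod p, ξ ≠ 0 ∧ ξ ^ 3 + α = β * ξ := by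
    intro β
    rw [Finset.mem_image]
    constructor
    · rintro ⟨ξ, hξ, hfξ⟩
      rw [mem_sS] at hξ
      refine ⟨ξ, hξ, ?_⟩
      have hinv : ξ⁻¹ * ξ = 1 := inv_mul_cancel₀ hξ
      have hβ : ξ ^ 2 + α * ξ⁻¹ = β := hfξ
      linear_combination ξ * hβ - α * hinv
    · rintro ⟨ξ, hξ, heq⟩
      refine ⟨ξ, mem_sS.mpr hξ, ?_⟩
      have hinv : ξ⁻¹ * ξ = 1 := inv_mul_cancel₀ hξ
      show ξ ^ 2 + α * ξ⁻¹ = β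
      linear_combination ξ⁻¹ * heq + (β - ξ ^ 2) * hinv
  apply Finset.card_nbij' (i := fun b : ℕ => ((b : ZMod p)))
    (j := fun β : ZMod p => β.val)
  · intro b hb
    rw [Finset.mem_coe, Finset.mem_filter] at hb
    obtain ⟨hbr, x, hx, hmod⟩ := hb
    rw [Finset.mem_Icc] at hx
    rw [Finset.mem_coe, hmem]
    have hcast := (ZMod.intCast_eq_intCast_iff _ _ _).2 hmod
    push_cast at hcast
    refine ⟨(x : ZMod p), ?_, hcast⟩
    rw [Ne, ZMod.natCast_eq_zero_iff]
    intro hdvd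
    rcases Nat.eq_zero_or_pos x with rfl | hpos
    · omega
    · have := Nat.le_of_dvd hpos hdvd
      omega
  · intro β hβ
    rw [Finset.mem_coe, hmem] at hβ
    obtain ⟨ξ, hξ, heq⟩ := hβ
    rw [Finset.mem_coe, Finset.mem_filter, Finset.mem_range]
    refine ⟨ZMod.val_lt β, ξ.val, ?_, ?_⟩
    · rw [Finset.mem_Icc]
      have h1 : 0 < ξ.val := ZMod.val_pos.mpr hξ
      have h2 : ξ.val < p := ZMod.val_lt ξ
      omega
    · rw [← ZMod.intCast_eq_intCast_iff]
      push_cast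
      rw [ZMod.natCast_zmod_val, ZMod.natCast_zmod_val]
      exact heq
  · intro b hb
    rw [Finset.mem_coe, Finset.mem_filter, Finset.mem_range] at hb
    exact ZMod.val_cast_of_lt hb.1
  · intro β _
    exact ZMod.natCast_zmod_val β
end final2

theorem stmt_15 (p : ℕ) [hp : Fact p.Prime] (hp3 : 3 < p)
    (a : ℤ) (ha : ¬ (p : ℤ) ∣ a) :
    6 * (((Finset.range p).filter (fun b : ℕ =>
      ∃ x ∈ Finset.Icc 1 (p - 1),
        (x : ℤ) ^ 3 + (a) ≡ (b : ℤ) * (x : ℤ) [ZMOD (p : ℤ)])).card : ℤ)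
      = 4 * ((p : ℤ) - legendreSym 3 p) + (legendreSym 3 p - 1)
        + (1 - 3 * legendreSym 3 p) * legendreSym p 2 * (∑ y ∈ Finset.Icc 1 (p - 1), legendreSym p ((y : ℤ) ^ 3 + 2 * a ^ 2)) := by
  classical
  set α := ((a : ZMod p)) with hαdef
  have hα : α ≠ 0 := by
    rw [hαdef, Ne, ZMod.intCast_zmod_eq_zero_iff_dvd]
    exact ha
  have h3 : (3 : ZMod p) ≠ 0 := three_nz hp3
  have h2 : (2 : ZMod p) ≠ 0 := two_nz hp3
  rw [V_eq hp3 a ha]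
  have hcount := count1 α hα
  have hmd := MD_eq_P α hα h3
  have htd := TD_eq_M α hα h3
  have hpe := P_eval hp3 α hα
  have hsc : ((sS p).card : ℤ) = (p : ℤ) - 1 := by
    rw [sS_card hp3]
    push_cast [Nat.cast_sub (show 1 ≤ p by omega)]
    ring
  have hmdz : ((MsetD α).card : ℤ) + ((DsetD α).card : ℤ) = ((PsetD α).card : ℤ) := by
    exact_mod_cast congrArg (Nat.cast : ℕ → ℤ) hmd
  have htdz : ((TsetD α).card : ℤ) + 2 * ((DsetD α).card : ℤ) = ((MsetD α).card : ℤ) := by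
    exact_mod_cast congrArg (Nat.cast : ℕ → ℤ) htd
  set S := ∑ t ∈ sS p, quadraticChar (ZMod p) (t ^ 3 + 2 * α ^ 2) with hS
  set χ2 := quadraticChar (ZMod p) 2 with hχ2
  have hmain : 6 * ((((sS p).image (fF α)).card : ℤ))
      = 4 * ((p : ℤ) - 1) - 2 * χ2 * S := by
    rw [hcount, hsc]
    linarith [hmdz, htdz, hpe]
  rw [legendre_sum_eq hp3 a, ← hS, legendre2_eq hp3, ← hχ2]
  rcases legendre3_cases hp3 with hL | ⟨hL, hp2⟩
  · rw [hL]
    linear_combination hmain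
  · rw [hL]
    have hSe : S = -χ2 := S_eval hp3 hp2 α hα
    have hchi : χ2 * S = -1 := by
      rw [hSe]
      have := quadraticChar_sq_one h2
      linear_combination -this
    linear_combination hmain - 6 * hchi
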